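/- For every n ≥ 1, the sphere S^n ⊂ ℝ^{n+1} satisfies TC^β_2(S^n) ≤ 3: the product S^n × S^n can be covered by the three open sets U_+ = (S^n∖{N}) × (S^n∖{N}), U_− = (S^n∖{S}) × (S^n∖{S}), and V = (D_+ × D_−) ∪ (D_− × D_+), where N and S are the north and south poles and D_± = {x ∈ S^n : ±x_{n+1} > 0}; each of these sets is invariant under the swap involution and admits a continuous swap-equivariant section of the evaluation map e_2 : C(I,S^n) → S^n × S^n. -/

import Mathlib

open unitInterval

noncomputable section

/-- The point `j/(n-1)` of the unit interval, for `j : Fin n`.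
These are the `n` evaluation points `0, 1/(n-1), …, (n-2)/(n-1), 1`. -/
def evalPt (n : ℕ) (j : Fin n) : unitInterval :=
  ⟨(j : ℝ) / ((n : ℝ) - 1), by
    have hn : 1 ≤ n := j.pos
    rcases eq_or_lt_of_le hn with h | h
    · have hn1 : n = 1 := h.symm
      subst hn1
      simp [Fin.fin_one_eq_zero j]
    · have h1 : (0 : ℝ) < (n : ℝ) - 1 := by
        have : (1 : ℝ) < (n : ℝ) := by exact_mod_cast h
        linarith
      constructor
      · exact div_nonneg (Nat.cast_nonneg _) h1.le
      · rw [div_le_one h1]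
        have hj : (j : ℕ) + 1 ≤ n := j.is_lt
        have : ((j : ℕ) : ℝ) + 1 ≤ (n : ℝ) := by exact_mod_cast hj
        linarith⟩

/-- Coordinate reversal (the involution `β`) on `n`-tuples:
`β·(x_1,…,x_n) = (x_n,…,x_1)`. -/
def rtuple {X : Type*} {n : ℕ} (x : Fin n → X) : Fin n → X := fun j => x j.rev

/-- Path reversal (the involution `β`) on the free path space `C(I,X)`:
`(β·γ)(t) = γ(1-t)`. -/
def rpath {X : Type*} [TopologicalSpace X] (γ : C(unitInterval, X)) : C(unitInterval, X) :=
  γ.comp ⟨unitInterval.symm, unitInterval.continuous_symm⟩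

/-- `X^n` can be covered by `k` open sets, on each of which there is a continuous
section of the evaluation map `e_n : C(I,X) → X^n`,
`γ ↦ (γ(0), γ(1/(n-1)), …, γ(1))`. -/
def HasPlanners (X : Type*) [TopologicalSpace X] (n k : ℕ) : Prop :=
  ∃ U : Fin k → Set (Fin n → X),
    (∀ i, IsOpen (U i)) ∧ (⋃ i, U i) = Set.univ ∧
    (∀ i, ∃ s : C(U i, C(unitInterval, X)),
      ∀ x : U i, ∀ j : Fin n, s x (evalPt n j) = (x : Fin n → X) j)

/-- The `n`-th (ordinary, higher) topological complexity `TC_n(X)`, as a value in `ℕ∞`. -/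
def TCn (X : Type*) [TopologicalSpace X] (n : ℕ) : ℕ∞ :=
  sInf {k : ℕ∞ | ∃ m : ℕ, (m : ℕ∞) = k ∧ HasPlanners X n m}

/-- `X^n` can be covered by `k` β-invariant open sets, on each of which there is a
continuous β-equivariant section of the evaluation map `e_n : C(I,X) → X^n`
(a bidirectional motion planner). -/
def HasBidirPlanners (X : Type*) [TopologicalSpace X] (n k : ℕ) : Prop :=
  ∃ U : Fin k → Set (Fin n → X),
    (∀ i, IsOpen (U i)) ∧ (⋃ i, U i) = Set.univ ∧
    (∀ i, ∀ x ∈ U i, rtuple x ∈ U i) ∧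
    (∀ i, ∃ s : C(U i, C(unitInterval, X)),
      (∀ x : U i, ∀ j : Fin n, s x (evalPt n j) = (x : Fin n → X) j) ∧
      (∀ x : U i, ∀ hx : rtuple (x : Fin n → X) ∈ U i,
        s ⟨rtuple (x : Fin n → X), hx⟩ = rpath (s x)))

/-- The `n`-th bidirectional topological complexity `TC^β_n(X)`, as a value in `ℕ∞`. -/
def TCbeta (X : Type*) [TopologicalSpace X] (n : ℕ) : ℕ∞ :=
  sInf {k : ℕ∞ | ∃ m : ℕ, (m : ℕ∞) = k ∧ HasBidirPlanners X n m}

/-- The action of a permutation `sg ∈ Σ_n` on `n`-tuples (by permuting coordinates). -/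
def permTuple {X : Type*} {n : ℕ} (sg : Equiv.Perm (Fin n)) (x : Fin n → X) : Fin n → X :=
  fun j => x (sg j)

/-- `X^n` can be covered by `k` `Σ_n`-invariant open sets, on each of which there is a
continuous `Σ_n`-equivariant section of `E_n : X^{J_n} → X^n`,
`(α_1,…,α_n) ↦ (α_1(1),…,α_n(1))`, where `X^{J_n}` is the space of `n`-tuples of paths
with a common initial point. -/
def HasSymPlanners (X : Type*) [TopologicalSpace X] (n k : ℕ) : Prop :=
  ∃ U : Fin k → Set (Fin n → X),
    (∀ i, IsOpen (U i)) ∧ (⋃ i, U i) = Set.univ ∧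
    (∀ i, ∀ sg : Equiv.Perm (Fin n), ∀ x ∈ U i, permTuple sg x ∈ U i) ∧
    (∀ i, ∃ s : C(U i, Fin n → C(unitInterval, X)),
      (∀ x : U i, ∀ j j' : Fin n, s x j 0 = s x j' 0) ∧
      (∀ x : U i, ∀ j : Fin n, s x j 1 = (x : Fin n → X) j) ∧
      (∀ x : U i, ∀ sg : Equiv.Perm (Fin n),
        ∀ hx : permTuple sg (x : Fin n → X) ∈ U i,
        s ⟨permTuple sg (x : Fin n → X), hx⟩ = permTuple sg (s x)))

/-- The `n`-th symmetrized topological complexity `TC^Σ_n(X)`, as a value in `ℕ∞`. -/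
def TCsym (X : Type*) [TopologicalSpace X] (n : ℕ) : ℕ∞ :=
  sInf {k : ℕ∞ | ∃ m : ℕ, (m : ℕ∞) = k ∧ HasSymPlanners X n m}

/-- The unit sphere `S^m ⊂ ℝ^{m+1}`. -/
abbrev Sph (m : ℕ) : Type :=
  Metric.sphere (0 : EuclideanSpace ℝ (Fin (m + 1))) 1

end
noncomputable section

/-- The setoid on `C(I,X)` identifying each path with its reverse. -/
def pathRevSetoid (X : Type*) [TopologicalSpace X] : Setoid C(unitInterval, X) where
  r γ δ := γ = δ ∨ γ = rpath δ
  iseqv := by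
    constructor
    · intro γ; exact Or.inl rfl
    · intro γ δ h
      rcases h with h | h
      · exact Or.inl h.symm
      · refine Or.inr ?_
        subst h
        ext t
        simp [rpath]
    · intro γ δ η h1 h2
      rcases h1 with h1 | h1 <;> rcases h2 with h2 | h2
      · exact Or.inl (h1.trans h2)
      · exact Or.inr (h1.trans h2)
      · subst h1 h2; exact Or.inr rfl
      · subst h1 h2
        refine Or.inl ?_
        ext t
        simp [rpath]

/-- The quotient `C(I,X)/β` of the free path space by path reversal. -/
def PathQuot (X : Type*) [TopologicalSpace X] : Type _ := Quotient (pathRevSetoid X)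

instance (X : Type*) [TopologicalSpace X] : TopologicalSpace (PathQuot X) :=
  instTopologicalSpaceQuotient

/-- The setoid on `Y × Y` identifying a pair with its swap. -/
def swapSetoid (Y : Type*) : Setoid (Y × Y) where
  r p q := p = q ∨ p = Prod.swap q
  iseqv := by
    constructor
    · intro p; exact Or.inl rfl
    · intro p q h
      rcases h with h | h
      · exact Or.inl h.symm
      · exact Or.inr (by rw [h, Prod.swap_swap])
    · intro p q u h1 h2
      rcases h1 with h1 | h1 <;> rcases h2 with h2 | h2
      · exact Or.inl (h1.trans h2)
      · exact Or.inr (h1.trans h2)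
      · subst h1 h2; exact Or.inr rfl
      · subst h1 h2; exact Or.inl (Prod.swap_swap _)

/-- The second symmetric product `SP²(Y)`, the quotient of `Y × Y` by the swap involution. -/
def SP2 (Y : Type*) [TopologicalSpace Y] : Type _ := Quotient (swapSetoid Y)

instance (Y : Type*) [TopologicalSpace Y] : TopologicalSpace (SP2 Y) :=
  instTopologicalSpaceQuotient

/-- The map `φ : (X^l)² → X^{2l}`,
`φ(x_1,…,x_{2l}) = (x_l,…,x_1,x_{l+1},…,x_{2l})`. -/
def phiMap {X : Type*} (l : ℕ) (p : (Fin l → X) × (Fin l → X)) : Fin (2 * l) → X :=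
  fun j =>
    if h : (j : ℕ) < l then p.1 ⟨l - 1 - (j : ℕ), by omega⟩
    else p.2 ⟨(j : ℕ) - l, by have := j.isLt; omega⟩

/-- The north pole `N = (0,…,0,1)` of `S^n`. -/
def northPole (n : ℕ) : Sph n :=
  ⟨EuclideanSpace.single (Fin.last n) (1 : ℝ), by
    simp [mem_sphere_zero_iff_norm, EuclideanSpace.norm_single]⟩

/-- The south pole `S = (0,…,0,-1)` of `S^n`. -/
def southPole (n : ℕ) : Sph n :=
  ⟨EuclideanSpace.single (Fin.last n) (-1 : ℝ), by
    simp [mem_sphere_zero_iff_norm, EuclideanSpace.norm_single]⟩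

/-- The open upper hemisphere `D_+ = {x ∈ S^n : x_{n+1} > 0}`. -/
def upperHemi (n : ℕ) : Set (Sph n) :=
  {x | 0 < (x : EuclideanSpace ℝ (Fin (n + 1))) (Fin.last n)}

/-- The open lower hemisphere `D_- = {x ∈ S^n : x_{n+1} < 0}`. -/
def lowerHemi (n : ℕ) : Set (Sph n) :=
  {x | (x : EuclideanSpace ℝ (Fin (n + 1))) (Fin.last n) < 0}

end

noncomputable section

/-- `U_+ = (S^n∖{N}) × (S^n∖{N})`. -/
def Uplus (n : ℕ) : Set (Sph n × Sph n) :=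
  {p | p.1 ≠ northPole n ∧ p.2 ≠ northPole n}

/-- `U_- = (S^n∖{S}) × (S^n∖{S})`. -/
def Uminus (n : ℕ) : Set (Sph n × Sph n) :=
  {p | p.1 ≠ southPole n ∧ p.2 ≠ southPole n}

/-- `V = (D_+ × D_-) ∪ (D_- × D_+)`. -/
def Vset (n : ℕ) : Set (Sph n × Sph n) :=
  (upperHemi n ×ˢ lowerHemi n) ∪ (lowerHemi n ×ˢ upperHemi n)

/-- `W ⊆ S^n × S^n` is swap-invariant and admits a continuous swap-equivariant
section of the evaluation map `e_2 : C(I,S^n) → S^n × S^n`, `γ ↦ (γ(0),γ(1))`. -/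
def HasSwapEquivariantSection (n : ℕ) (W : Set (Sph n × Sph n)) : Prop :=
  (∀ p ∈ W, Prod.swap p ∈ W) ∧
  ∃ s : C(W, C(unitInterval, Sph n)),
    (∀ p : W, s p 0 = (p : Sph n × Sph n).1 ∧ s p 1 = (p : Sph n × Sph n).2) ∧
    (∀ p : W, ∀ hp : Prod.swap (p : Sph n × Sph n) ∈ W,
      s ⟨Prod.swap (p : Sph n × Sph n), hp⟩ = rpath (s p))

end

/-!
Each of the three sections is the radial projection to `S^n` of a path in `ℝ^{n+1} ∖ {0}` made
of straight segments, which miss the origin because their endpoints are never antipodal. On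
`U_+` the path from `x` to `y` runs through the south pole, on `U_-` through the north pole, so
reversing the pair reverses the path. On `D_+ × D_-` it runs from `x` to `N`, along a half great
circle to `S` (this needs `n ≥ 1`), then to `y`; on `D_- × D_+` one takes the reverse of the path
of the swapped pair, and the two pieces glue because they are disjoint open sets.
-/

section Detour

variable {E : Type*} [NormedAddCommGroup E] [NormedSpace ℝ E]

lemma sub_smul_add_smul_ne_zero {v w : E} (hv : ‖v‖ = 1) (hw : ‖w‖ = 1) (hvw : v ≠ -w)
    {a : ℝ} (ha₀ : 0 ≤ a) (ha₁ : a ≤ 1) : (1 - a) • v + a • w ≠ 0 := by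
  intro h
  have hnorm : 1 - a = a := by
    simpa [norm_smul, abs_of_nonneg ha₀, abs_of_nonneg (sub_nonneg.2 ha₁), hv, hw]
      using congrArg norm (eq_neg_of_add_eq_zero_left h)
  obtain rfl : a = 1 / 2 := by linarith
  apply hvw
  have h' : (1 / 2 : ℝ) • (v + w) = 0 := by rw [← h]; module
  exact eq_neg_of_add_eq_zero_left ((smul_eq_zero.1 h').resolve_left (by norm_num))

/-- `3t - k` clamped to `[0, 1]`: the parameter of the `k`-th leg of `detour`. -/
def ramp (k t : ℝ) : ℝ := max 0 (min 1 (3 * t - k))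

lemma continuous_ramp (k : ℝ) : Continuous (ramp k) := by
  unfold ramp; fun_prop

lemma ramp_nonneg (k t : ℝ) : 0 ≤ ramp k t := le_max_left _ _

lemma ramp_le_one (k t : ℝ) : ramp k t ≤ 1 := max_le zero_le_one (min_le_left _ _)

lemma ramp_of_le {k t : ℝ} (h : 3 * t - k ≤ 0) : ramp k t = 0 :=
  max_eq_left (le_trans (min_le_right _ _) h)

lemma ramp_of_ge {k t : ℝ} (h : 1 ≤ 3 * t - k) : ramp k t = 1 := by
  rw [ramp, min_eq_left h, max_eq_right zero_le_one]

lemma ramp_one_sub (k t : ℝ) : ramp k (1 - t) = 1 - ramp (2 - k) t := by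
  simp only [ramp, min_def, max_def]
  split_ifs <;> linarith

/-- The path that runs along the segment from `x` to `γ 0`, then along `γ`, then along the
segment from `γ 1` to `y`, each leg on a third of `[0, 1]`. -/
def detour (γ : ℝ → E) (x y : E) (t : ℝ) : E :=
  (1 - ramp 0 t) • x + ramp 2 t • y + (ramp 0 t - ramp 2 t) • γ (ramp 1 t)

variable {γ : ℝ → E} {x y : E}

@[fun_prop]
lemma Continuous.detour {X : Type*} [TopologicalSpace X] (hγ : Continuous γ) {f g : X → E}
    {τ : X → ℝ} (hf : Continuous f) (hg : Continuous g) (hτ : Continuous τ) :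
    Continuous fun z => _root_.detour γ (f z) (g z) (τ z) := by
  have := continuous_ramp 0; have := continuous_ramp 1; have := continuous_ramp 2
  unfold _root_.detour; fun_prop

lemma detour_zero : detour γ x y 0 = x := by
  rw [detour, ramp_of_le (by norm_num), ramp_of_le (by norm_num)]
  simp

lemma detour_one : detour γ x y 1 = y := by
  rw [detour, ramp_of_ge (by norm_num), ramp_of_ge (by norm_num)]
  simp

lemma detour_one_sub (t : ℝ) : detour γ y x (1 - t) = detour (fun s => γ (1 - s)) x y t := by
  simp only [detour, ramp_one_sub]
  norm_num
  module

lemma detour_ne_zero (hx : ‖x‖ = 1) (hy : ‖y‖ = 1) (hγ : ∀ s, ‖γ s‖ = 1)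
    (hxγ : x ≠ -γ 0) (hyγ : y ≠ -γ 1) (t : ℝ) : detour γ x y t ≠ 0 := by
  rcases le_total t (1 / 3) with h₁ | h₁
  · rw [detour, ramp_of_le (k := 1) (by linarith), ramp_of_le (k := 2) (by linarith),
      zero_smul, add_zero, sub_zero]
    exact sub_smul_add_smul_ne_zero hx (hγ 0) hxγ (ramp_nonneg _ _) (ramp_le_one _ _)
  rcases le_total t (2 / 3) with h₂ | h₂
  · rw [detour, ramp_of_ge (k := 0) (by linarith), ramp_of_le (k := 2) (by linarith)]
    simpa using norm_ne_zero_iff.1 ((hγ _).symm ▸ one_ne_zero)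
  · rw [detour, ramp_of_ge (k := 0) (by linarith), ramp_of_ge (k := 1) (by linarith), sub_self,
      zero_smul, zero_add, add_comm]
    exact sub_smul_add_smul_ne_zero (hγ 1) hy (by rwa [ne_comm, ne_eq, neg_eq_iff_eq_neg])
      (ramp_nonneg _ _) (ramp_le_one _ _)

end Detour

lemma norm_cos_smul_add_sin_smul {F : Type*} [NormedAddCommGroup F] [InnerProductSpace ℝ F]
    {u v : F} (hu : ‖u‖ = 1) (hv : ‖v‖ = 1) (huv : inner ℝ u v = 0) (θ : ℝ) :
    ‖Real.cos θ • u + Real.sin θ • v‖ = 1 := by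
  have horth : inner ℝ (Real.cos θ • u) (Real.sin θ • v) = 0 := by
    simp [inner_smul_left, inner_smul_right, huv]
  have h := norm_add_sq_eq_norm_sq_add_norm_sq_real horth
  simp only [norm_smul, hu, hv, Real.norm_eq_abs, mul_one] at h
  nlinarith [norm_nonneg (Real.cos θ • u + Real.sin θ • v), abs_mul_abs_self (Real.cos θ),
    abs_mul_abs_self (Real.sin θ), Real.cos_sq_add_sin_sq θ]

lemma evalPt_zero (m : ℕ) : evalPt (m + 1) 0 = 0 := by
  ext; simp [evalPt]

lemma evalPt_last (m : ℕ) : evalPt (m + 2) (Fin.last (m + 1)) = 1 := by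
  ext
  simp only [evalPt, Fin.val_last, Set.Icc.coe_one]
  push_cast
  rw [show (m : ℝ) + 2 - 1 = m + 1 by ring]
  exact div_self (by positivity)

section Sphere

variable {n : ℕ}

local notation "𝔼" => EuclideanSpace ℝ (Fin (n + 1))

lemma mem_upperHemi {x : Sph n} : x ∈ upperHemi n ↔ 0 < (x : 𝔼) (Fin.last n) := Iff.rfl

lemma mem_lowerHemi {x : Sph n} : x ∈ lowerHemi n ↔ (x : 𝔼) (Fin.last n) < 0 := Iff.rfl

lemma isOpen_upperHemi : IsOpen (upperHemi n) :=
  isOpen_lt continuous_const (by fun_prop)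

lemma isOpen_lowerHemi : IsOpen (lowerHemi n) :=
  isOpen_lt (by fun_prop) continuous_const

lemma isOpen_Vset : IsOpen (Vset n) :=
  (isOpen_upperHemi.prod isOpen_lowerHemi).union (isOpen_lowerHemi.prod isOpen_upperHemi)

lemma northPole_mem_upperHemi : northPole n ∈ upperHemi n := by
  simp [upperHemi, northPole]

lemma southPole_mem_lowerHemi : southPole n ∈ lowerHemi n := by
  simp [lowerHemi, southPole]

lemma ne_of_mem_upperHemi_of_mem_lowerHemi {x y : Sph n} (hx : x ∈ upperHemi n)
    (hy : y ∈ lowerHemi n) : x ≠ y := by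
  rintro rfl
  exact lt_asymm (mem_upperHemi.1 hx) (mem_lowerHemi.1 hy)

lemma northPole_ne_southPole : northPole n ≠ southPole n :=
  ne_of_mem_upperHemi_of_mem_lowerHemi northPole_mem_upperHemi southPole_mem_lowerHemi

lemma Uplus_union_Uminus_union_Vset : Uplus n ∪ Uminus n ∪ Vset n = Set.univ := by
  refine Set.eq_univ_of_forall fun p => ?_
  by_contra h
  simp only [Set.mem_union, Uplus, Uminus, Set.mem_ofPred_eq, not_or, not_and_or, not_not] at h
  obtain ⟨⟨hN, hS⟩, hV⟩ := h
  rcases hN with hN | hN <;> rcases hS with hS | hS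
  · exact northPole_ne_southPole (hN.symm.trans hS)
  · exact hV (Or.inl ⟨hN ▸ northPole_mem_upperHemi, hS ▸ southPole_mem_lowerHemi⟩)
  · exact hV (Or.inr ⟨hS ▸ southPole_mem_lowerHemi, hN ▸ northPole_mem_upperHemi⟩)
  · exact northPole_ne_southPole (hN.symm.trans hS)

lemma hasSwapEquivariantSection_of_nonvanishing {W : Set (Sph n × Sph n)}
    (hW : ∀ p ∈ W, p.swap ∈ W) (F : Sph n × Sph n → I → 𝔼)
    (hF : Continuous fun q : W × I => F q.1 q.2) (hF_ne : ∀ p ∈ W, ∀ t, F p t ≠ 0)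
    (hF₀ : ∀ p ∈ W, F p 0 = p.1) (hF₁ : ∀ p ∈ W, F p 1 = p.2)
    (hF_swap : ∀ p ∈ W, ∀ t, F p.swap t = F p (σ t)) :
    HasSwapEquivariantSection n W := by
  have hF_ne' : ∀ q : W × I, ‖F q.1 q.2‖ ≠ 0 := fun q =>
    norm_ne_zero_iff.2 (hF_ne _ q.1.2 _)
  let G : W × I → 𝔼 := fun q => ‖F q.1 q.2‖⁻¹ • F q.1 q.2
  have hG : Continuous G := (hF.norm.inv₀ hF_ne').smul hF
  have hG_mem : ∀ q, G q ∈ Metric.sphere 0 1 := fun q => by simp [G, norm_smul, hF_ne' q]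
  let Φ : C(W × I, Sph n) := ⟨fun q => ⟨G q, hG_mem q⟩, hG.subtype_mk hG_mem⟩
  refine ⟨hW, Φ.curry, fun p => ⟨?_, ?_⟩, fun p hp => ?_⟩
  · ext1; simp [Φ, G, hF₀ _ p.2]
  · ext1; simp [Φ, G, hF₁ _ p.2]
  · ext t : 2
    simp [Φ, G, rpath, hF_swap _ p.2]

lemma isOpen_ne_and_ne (Q : Sph n) : IsOpen {p : Sph n × Sph n | p.1 ≠ Q ∧ p.2 ≠ Q} :=
  (isOpen_ne_fun continuous_fst continuous_const).inter
    (isOpen_ne_fun continuous_snd continuous_const)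

lemma hasSwapEquivariantSection_ne_and_ne (Q : Sph n) :
    HasSwapEquivariantSection n {p | p.1 ≠ Q ∧ p.2 ≠ Q} := by
  have hQ : ∀ x : Sph n, x ≠ Q → (x : 𝔼) ≠ -(-(Q : 𝔼)) := fun x hx h =>
    hx (Subtype.ext (by simpa using h))
  refine hasSwapEquivariantSection_of_nonvanishing (fun p hp => ⟨hp.2, hp.1⟩)
    (fun p t => detour (fun _ => -(Q : 𝔼)) p.1 p.2 t) (by fun_prop)
    (fun p hp t => detour_ne_zero (by simp) (by simp) (fun _ => by simp) (hQ _ hp.1) (hQ _ hp.2) t)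
    (fun p _ => detour_zero) (fun p _ => detour_one) (fun p _ t => ?_)
  simp [coe_symm_eq, detour_one_sub]

lemma coe_southPole : (southPole n : 𝔼) = -(northPole n : 𝔼) := by
  ext i
  simp only [southPole, northPole, PiLp.neg_apply, PiLp.single_apply]
  split_ifs <;> norm_num

lemma exists_path_northPole_southPole (hn : 1 ≤ n) : ∃ γ : ℝ → 𝔼,
    Continuous γ ∧ (∀ s, ‖γ s‖ = 1) ∧ γ 0 = northPole n ∧ γ 1 = southPole n := by
  let e : 𝔼 := EuclideanSpace.single 0 1
  have he : inner ℝ (northPole n : 𝔼) e = 0 := by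
    simp [northPole, e, EuclideanSpace.inner_single_left, Fin.ext_iff]
    omega
  refine ⟨fun s => Real.cos (Real.pi * s) • (northPole n : 𝔼) + Real.sin (Real.pi * s) • e,
    by fun_prop, fun s => norm_cos_smul_add_sin_smul (by simp) (by simp [e]) he _, by simp,
    by simp [coe_southPole]⟩

lemma hasSwapEquivariantSection_Vset (hn : 1 ≤ n) : HasSwapEquivariantSection n (Vset n) := by
  obtain ⟨γ, hγc, hγ, hγ₀, hγ₁⟩ := exists_path_northPole_southPole hn
  have hxγ : ∀ x ∈ upperHemi n, (x : 𝔼) ≠ -γ 0 := fun x hx h =>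
    ne_of_mem_upperHemi_of_mem_lowerHemi hx southPole_mem_lowerHemi
      (Subtype.ext (by rw [h, hγ₀, coe_southPole]))
  have hyγ : ∀ y ∈ lowerHemi n, (y : 𝔼) ≠ -γ 1 := fun y hy h =>
    ne_of_mem_upperHemi_of_mem_lowerHemi northPole_mem_upperHemi hy
      (Subtype.ext (by rw [h, hγ₁, coe_southPole, neg_neg]))
  have hV : ∀ p ∈ Vset n,
      (0 < (p.1 : 𝔼) (Fin.last n) → p ∈ upperHemi n ×ˢ lowerHemi n) ∧
      (¬0 < (p.1 : 𝔼) (Fin.last n) → p ∈ lowerHemi n ×ˢ upperHemi n) := by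
    rintro p (h | h)
    · exact ⟨fun _ => h, fun h' => absurd h.1 h'⟩
    · exact ⟨fun h' => absurd h' (lt_asymm (mem_lowerHemi.1 h.1)), fun _ => h⟩
  refine hasSwapEquivariantSection_of_nonvanishing (fun p hp => hp.symm.imp And.symm And.symm)
    (fun p t => if 0 < (p.1 : 𝔼) (Fin.last n) then detour γ p.1 p.2 t
      else detour γ p.2 p.1 (σ t)) ?_ ?_ ?_ ?_ ?_
  · refine Continuous.if (fun q hq => ?_) (by fun_prop) (by fun_prop)
    have hq0 := frontier_lt_subset_eq continuous_const (by fun_prop) hq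
    rcases q.1.2 with h | h
    · exact absurd hq0 h.1.ne
    · exact absurd hq0.symm h.1.ne
  · intro p hp t
    split_ifs with h
    · have := (hV p hp).1 h
      exact detour_ne_zero (by simp) (by simp) hγ (hxγ _ this.1) (hyγ _ this.2) _
    · have := (hV p hp).2 h
      exact detour_ne_zero (by simp) (by simp) hγ (hxγ _ this.2) (hyγ _ this.1) _
  · intro p hp
    split_ifs <;> simp [detour_zero, detour_one]
  · intro p hp
    split_ifs <;> simp [detour_zero, detour_one]
  · intro p hp t
    rcases hp with h | h
    · simp only [Prod.fst_swap, Prod.snd_swap, if_neg (lt_asymm (mem_lowerHemi.1 h.2)),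
        if_pos (mem_upperHemi.1 h.1)]
    · simp only [Prod.fst_swap, Prod.snd_swap, if_pos (mem_upperHemi.1 h.2),
        if_neg (lt_asymm (mem_lowerHemi.1 h.1)), symm_symm]

end Sphere

lemma hasBidirPlanners_two_of_cover {n k : ℕ} (W : Fin k → Set (Sph n × Sph n))
    (hW_open : ∀ i, IsOpen (W i)) (hW_cover : ⋃ i, W i = Set.univ)
    (hW : ∀ i, HasSwapEquivariantSection n (W i)) : HasBidirPlanners (Sph n) 2 k := by
  -- `e (rtuple x)` and `(e x).swap` agree definitionally; the invariance and equivariance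
  -- steps below rely on this.
  let e : (Fin 2 → Sph n) → Sph n × Sph n := fun x => (x 0, x 1)
  refine ⟨fun i => e ⁻¹' W i, fun i => (hW_open i).preimage (by fun_prop),
    by rw [← Set.preimage_iUnion, hW_cover, Set.preimage_univ],
    fun i x hx => (hW i).1 (e x) hx, fun i => ?_⟩
  obtain ⟨-, s, hs_ends, hs_swap⟩ := hW i
  let r : C(e ⁻¹' W i, W i) := ⟨fun x => ⟨e x, x.2⟩, by fun_prop⟩
  refine ⟨s.comp r, fun x j => ?_, fun x hx => ?_⟩
  · fin_cases j
    · exact (congrArg (s (r x)) (evalPt_zero 1)).trans (hs_ends (r x)).1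
    · exact (congrArg (s (r x)) (evalPt_last 0)).trans (hs_ends (r x)).2
  · exact hs_swap (r x) hx

/-- For every `n ≥ 1`, `TC^β_2(S^n) ≤ 3`, realized by the explicit
cover of `S^n × S^n` by the three open swap-invariant sets
`U_+ = (S^n∖{N}) × (S^n∖{N})`, `U_- = (S^n∖{S}) × (S^n∖{S})` and
`V = (D_+ × D_-) ∪ (D_- × D_+)`, each admitting a continuous swap-equivariant
section of the evaluation map `e_2`. -/
theorem sphere_TCbeta_two_le_three (n : ℕ) (hn : 1 ≤ n) :
    TCbeta (Sph n) 2 ≤ 3 ∧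
    IsOpen (Uplus n) ∧ IsOpen (Uminus n) ∧ IsOpen (Vset n) ∧
    Uplus n ∪ Uminus n ∪ Vset n = Set.univ ∧
    HasSwapEquivariantSection n (Uplus n) ∧
    HasSwapEquivariantSection n (Uminus n) ∧
    HasSwapEquivariantSection n (Vset n) := by
  have hUplus_open : IsOpen (Uplus n) := isOpen_ne_and_ne (northPole n)
  have hUminus_open : IsOpen (Uminus n) := isOpen_ne_and_ne (southPole n)
  have hUplus : HasSwapEquivariantSection n (Uplus n) :=
    hasSwapEquivariantSection_ne_and_ne (northPole n)
  have hUminus : HasSwapEquivariantSection n (Uminus n) :=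
    hasSwapEquivariantSection_ne_and_ne (southPole n)
  have hV := hasSwapEquivariantSection_Vset hn
  have hplanners : HasBidirPlanners (Sph n) 2 3 :=
    hasBidirPlanners_two_of_cover ![Uplus n, Uminus n, Vset n]
      (by simp [Fin.forall_fin_succ, hUplus_open, hUminus_open, isOpen_Vset])
      (by simpa [Set.iUnion_fin_add_one_eq_iUnion_succ, Function.comp_def, Set.union_assoc]
        using Uplus_union_Uminus_union_Vset)
      (by simp [Fin.forall_fin_succ, hUplus, hUminus, hV])
  exact ⟨sInf_le ⟨3, rfl, hplanners⟩, hUplus_open, hUminus_open, isOpen_Vset,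
    Uplus_union_Uminus_union_Vset, hUplus, hUminus, hV⟩
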